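/- Let A_1 be the n×n matrix over F_2 with rows and columns indexed by {0,…,n−1} and entries A_1(i,j) = 1 if and only if j = 0 or j = i, and let A_m = A_1^{⊗m} be its m-fold Kronecker power, whose rows and columns are indexed by {0,…,n−1}^m and whose entry in row i and column j equals 1 if and only if j ⪯ i. Then for any m ≥ 1 and 0 ≤ r ≤ m: (1) the rows of A_m indexed by {i : wt(i) ≥ r+1} (equivalently, the rows of A_m of Hamming weight at least 2^{r+1}) form an F_2-basis of D_n(r,m); (2) the columns of A_m indexed by {j : wt(j) ≤ r} (equivalently, the columns of A_m of Hamming weight at least n^{m−r}) form an F_2-basis of C_n(r,m). -/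

import Mathlib

open Finset

/-- The `l`-th subvector in the concatenation decomposition:
`(subvec v l) i' = v (i'|l)`. -/
def subvec {n m : ℕ} (v : (Fin (m + 1) → Fin n) → ZMod 2) (l : Fin n) :
    (Fin m → Fin n) → ZMod 2 :=
  fun i' => v (Fin.snoc i' l)

/-- The Berman code `D_n(r,m)`, defined recursively. -/
def BermanD (n : ℕ) : (m : ℕ) → ℕ → Set ((Fin m → Fin n) → ZMod 2)
  | 0, _ => {0}
  | m + 1, r =>
    if r = 0 then {v | ∑ i, v i = 0}
    else if m + 1 ≤ r then {0}
    else {v | (∀ l : Fin n, subvec v l ∈ BermanD n m (r - 1)) ∧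
              (fun i' => ∑ l : Fin n, subvec v l i') ∈ BermanD n m r}

/-- The dual Berman code `C_n(r,m)`, defined recursively. -/
def BermanC (n : ℕ) : (m : ℕ) → ℕ → Set ((Fin m → Fin n) → ZMod 2)
  | 0, _ => Set.univ
  | m + 1, r =>
    if r = 0 then {v | ∃ c : ZMod 2, ∀ i, v i = c}
    else if m + 1 ≤ r then Set.univ
    else {v | ∃ (u : (Fin m → Fin n) → ZMod 2) (w : Fin n → (Fin m → Fin n) → ZMod 2),
            u ∈ BermanC n m r ∧
            (∀ l : Fin n, (l : ℕ) < n - 1 → w l ∈ BermanC n m (r - 1)) ∧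
            (∀ l : Fin n, (l : ℕ) = n - 1 → w l = 0) ∧
            (∀ l : Fin n, subvec v l = u + w l)}

/-- Hamming weight of a binary vector. -/
def hwt {n m : ℕ} (v : (Fin m → Fin n) → ZMod 2) : ℕ :=
  (Finset.univ.filter fun i => v i ≠ 0).card

/-- `preceq j i` means `j ⪯ i`: for every position `k`, either `j k = 0` or `j k = i k`. -/
def preceq {n m : ℕ} (j i : Fin m → Fin n) : Prop :=
  ∀ k, (j k : ℕ) = 0 ∨ j k = i k

instance {n m : ℕ} (j i : Fin m → Fin n) : Decidable (preceq j i) :=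
  inferInstanceAs (Decidable (∀ k, (j k : ℕ) = 0 ∨ j k = i k))

/-- Hamming weight of an index tuple. -/
def wtTuple {n m : ℕ} (i : Fin m → Fin n) : ℕ :=
  (Finset.univ.filter fun k => (i k : ℕ) ≠ 0).card

/-- The vector `c_m(i')`: the indicator of `{i : i ⪯ i'}`. -/
def cVec {n : ℕ} (m : ℕ) (i' : Fin m → Fin n) : (Fin m → Fin n) → ZMod 2 :=
  fun i => if preceq i i' then 1 else 0

/-- The vector `d_m(i')`: the indicator of `{i : i' ⪯ i}`. -/
def dVec {n : ℕ} (m : ℕ) (i' : Fin m → Fin n) : (Fin m → Fin n) → ZMod 2 :=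
  fun i => if preceq i' i then 1 else 0

/-- The matrix `A_m = A_1^{⊗m}`: its entry in row `i` and column `j` is `1` iff `j ⪯ i`. -/
def Amat (n m : ℕ) : Matrix (Fin m → Fin n) (Fin m → Fin n) (ZMod 2) :=
  fun i j => if preceq j i then 1 else 0

open Matrix

/-!
Over `𝔽₂` the matrix `A₁` is an involution, hence so is its Kronecker power `A_m`. Consequently the
rows (and the columns) of `A_m` are linearly independent, and a vector `v` lies in the span of the
rows of weight `≥ r + 1` iff `v A_m` vanishes at every index of weight `≤ r`; dually, `v` lies in
the span of the columns of weight `≤ r` iff `A_m v` vanishes at every index of weight `≥ r + 1`.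
Splitting off the last coordinate of an index turns `A_{m+1}` into `A_m ⊗ A₁`, and under this
splitting these check conditions obey exactly the recursions defining `D_n(r,m)` and `C_n(r,m)`.
-/

section TensorPower

variable {R α : Type*} [CommSemiring R]

def tensorPow (M : Matrix α α R) (ι : Type*) [Fintype ι] : Matrix (ι → α) (ι → α) R :=
  fun i j => ∏ k, M (i k) (j k)

theorem tensorPow_mul [Fintype α] [DecidableEq α] {ι : Type*} [Fintype ι] [DecidableEq ι]
    (M N : Matrix α α R) : tensorPow M ι * tensorPow N ι = tensorPow (M * N) ι := by
  ext i j
  simp only [tensorPow, mul_apply, ← prod_mul_distrib, Fintype.prod_sum]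

theorem tensorPow_one [DecidableEq α] {ι : Type*} [Fintype ι] :
    tensorPow (1 : Matrix α α R) ι = 1 := by
  ext i j
  simp [tensorPow, one_apply, funext_iff, prod_ite_zero]

theorem sum_fin_snoc [Fintype α] {M : Type*} [AddCommMonoid M] {m : ℕ} (f : (Fin (m + 1) → α) → M) :
    ∑ j, f j = ∑ b, ∑ j, f (Fin.snoc j b) := by
  rw [← (Fin.snocEquiv fun _ => α).sum_comp, Fintype.sum_prod_type]
  rfl

theorem tensorPow_snoc (M : Matrix α α R) {m : ℕ} (i j : Fin m → α) (a b : α) :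
    tensorPow M (Fin (m + 1)) (Fin.snoc i a) (Fin.snoc j b) = tensorPow M (Fin m) i j * M a b := by
  simp [tensorPow, Fin.prod_univ_castSucc]

theorem vecMul_tensorPow_snoc [Fintype α] (M : Matrix α α R) {m : ℕ} (v : (Fin (m + 1) → α) → R)
    (i : Fin m → α) (a : α) :
    (v ᵥ* tensorPow M (Fin (m + 1))) (Fin.snoc i a) =
      ((fun b => ((fun j => v (Fin.snoc j b)) ᵥ* tensorPow M (Fin m)) i) ᵥ* M) a := by
  simp only [vecMul, dotProduct, sum_fin_snoc, tensorPow_snoc, sum_mul, mul_assoc]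

theorem tensorPow_snoc_mulVec [Fintype α] (M : Matrix α α R) {m : ℕ} (v : (Fin (m + 1) → α) → R)
    (i : Fin m → α) (a : α) :
    (tensorPow M (Fin (m + 1)) *ᵥ v) (Fin.snoc i a) =
      (M *ᵥ fun b => (tensorPow M (Fin m) *ᵥ fun j => v (Fin.snoc j b)) i) a := by
  simp only [mulVec, dotProduct, sum_fin_snoc, tensorPow_snoc, mul_sum]
  congr! 2 with b _ j
  ring

end TensorPower

section SpanOfInverse

variable {ι R : Type*} [Fintype ι] [DecidableEq ι] [CommRing R]

theorem span_rows_eq_of_mul_eq_one {A B : Matrix ι ι R} (h : A * B = 1) (S : Set ι) :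
    (Submodule.span R (A '' S) : Set (ι → R)) = {v | ∀ i ∉ S, (v ᵥ* B) i = 0} := by
  apply Set.Subset.antisymm
  · intro v hv
    induction hv using Submodule.span_induction with
    | mem x hx =>
      obtain ⟨j, hj, rfl⟩ := hx
      intro i hi
      change (A * B) j i = 0
      rw [h, one_apply_ne (ne_of_mem_of_not_mem hj hi)]
    | zero => simp
    | add x y _ _ hx hy => intro i hi; simp [add_vecMul, hx i hi, hy i hi]
    | smul c x _ hx => intro i hi; simp [smul_vecMul, hx i hi]
  · intro v hv
    have hv' : v = ∑ i, (v ᵥ* B) i • A i := by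
      rw [← vecMul_eq_sum, vecMul_vecMul, mul_eq_one_comm.1 h, vecMul_one]
    rw [SetLike.mem_coe, hv']
    refine Submodule.sum_mem _ fun i _ => ?_
    by_cases hi : i ∈ S
    · exact Submodule.smul_mem _ _ (Submodule.subset_span ⟨i, hi, rfl⟩)
    · rw [hv i hi, zero_smul]
      exact Submodule.zero_mem _

theorem span_cols_eq_of_mul_eq_one {A B : Matrix ι ι R} (h : A * B = 1) (S : Set ι) :
    (Submodule.span R ((fun j i => A i j) '' S) : Set (ι → R)) =
      {v | ∀ i ∉ S, (B *ᵥ v) i = 0} := by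
  have hT : Aᵀ * Bᵀ = 1 := by rw [← transpose_mul, mul_eq_one_comm.1 h, transpose_one]
  have h_rows := span_rows_eq_of_mul_eq_one hT S
  simp only [vecMul_transpose] at h_rows
  exact h_rows

end SpanOfInverse

theorem exists_add_decomp_iff {R M ι : Type*} [Ring R] [AddCommGroup M] [Module R M]
    {U W : Submodule R M} (hWU : W ≤ U) (v : ι → M) (z i₀ : ι) :
    (∃ (u : M) (w : ι → M), u ∈ U ∧ (∀ l ≠ z, w l ∈ W) ∧ w z = 0 ∧ ∀ l, v l = u + w l) ↔
      v i₀ ∈ U ∧ ∀ l, v l - v i₀ ∈ W := by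
  constructor
  · rintro ⟨u, w, hu, hwW, hwz, hv⟩
    have hw : ∀ l, w l ∈ W := fun l => by
      obtain rfl | hl := eq_or_ne l z
      · exact hwz ▸ zero_mem W
      · exact hwW l hl
    refine ⟨hv i₀ ▸ add_mem hu (hWU (hw i₀)), fun l => ?_⟩
    rw [hv, hv, add_sub_add_left_eq_sub]
    exact sub_mem (hw l) (hw i₀)
  · rintro ⟨hv₀, hv⟩
    refine ⟨v z, fun l => v l - v z, ?_, fun l _ => ?_, sub_self _,
      fun l => (add_sub_cancel _ _).symm⟩
    · simpa using add_mem hv₀ (hWU (hv z))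
    · show v l - v z ∈ W
      rw [← sub_sub_sub_cancel_right (v l) (v z) (v i₀)]
      exact sub_mem (hv l) (hv z)

section Amat

variable {n : ℕ}

def Amat₁ (n : ℕ) : Matrix (Fin n) (Fin n) (ZMod 2) :=
  fun i j => if (j : ℕ) = 0 ∨ j = i then 1 else 0

theorem Amat_eq_tensorPow (n m : ℕ) : Amat n m = tensorPow (Amat₁ n) (Fin m) := by
  ext i j
  simp only [Amat, preceq, tensorPow, Amat₁, prod_boole, mem_univ, true_implies]
  congr

variable [NeZero n]

theorem vecMul_Amat₁_apply (x : Fin n → ZMod 2) (a : Fin n) :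
    (x ᵥ* Amat₁ n) a = if a = 0 then ∑ b, x b else x a := by
  split_ifs with ha <;> simp [vecMul, dotProduct, Amat₁, ha]

theorem Amat₁_mulVec_apply (x : Fin n → ZMod 2) (a : Fin n) :
    (Amat₁ n *ᵥ x) a = if a = 0 then x 0 else x 0 + x a := by
  split_ifs with ha
  · simp [mulVec, dotProduct, Amat₁, ha]
  · rw [mulVec, dotProduct, Fintype.sum_eq_add 0 a (Ne.symm ha) fun b hb => by simp [Amat₁, hb]]
    simp [Amat₁]

theorem Amat₁_mul_self : Amat₁ n * Amat₁ n = 1 := by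
  ext a b
  have h := Amat₁_mulVec_apply (fun x => Amat₁ n x b) a
  rw [mul_apply, one_apply]
  simp only [mulVec, dotProduct] at h
  rw [h]
  clear h
  simp only [Amat₁, Fin.val_eq_zero_iff, or_self]
  split_ifs <;> simp_all [CharTwo.add_self_eq_zero]

theorem Amat_mul_self (m : ℕ) : Amat n m * Amat n m = 1 := by
  rw [Amat_eq_tensorPow, tensorPow_mul, Amat₁_mul_self, tensorPow_one]

theorem Amat_apply_zero {m : ℕ} (i : Fin m → Fin n) : Amat n m i 0 = 1 :=
  if_pos fun _ => Or.inl rfl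

theorem vecMul_Amat_zero {m : ℕ} (v : (Fin m → Fin n) → ZMod 2) :
    (v ᵥ* Amat n m) 0 = ∑ i, v i := by
  simp [vecMul, dotProduct, Amat_apply_zero]

variable {m : ℕ}

theorem vecMul_Amat_snoc_zero (v : (Fin (m + 1) → Fin n) → ZMod 2) (i : Fin m → Fin n) :
    (v ᵥ* Amat n (m + 1)) (Fin.snoc i 0) = ((∑ l, subvec v l) ᵥ* Amat n m) i := by
  rw [Amat_eq_tensorPow, vecMul_tensorPow_snoc, vecMul_Amat₁_apply, if_pos rfl, sum_vecMul,
    Finset.sum_apply, ← Amat_eq_tensorPow]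
  rfl

theorem vecMul_Amat_snoc_of_ne_zero (v : (Fin (m + 1) → Fin n) → ZMod 2) (i : Fin m → Fin n)
    {a : Fin n} (ha : a ≠ 0) :
    (v ᵥ* Amat n (m + 1)) (Fin.snoc i a) = (subvec v a ᵥ* Amat n m) i := by
  rw [Amat_eq_tensorPow, vecMul_tensorPow_snoc, vecMul_Amat₁_apply, if_neg ha, ← Amat_eq_tensorPow]
  rfl

theorem Amat_mulVec_snoc_zero (v : (Fin (m + 1) → Fin n) → ZMod 2) (i : Fin m → Fin n) :
    (Amat n (m + 1) *ᵥ v) (Fin.snoc i 0) = (Amat n m *ᵥ subvec v 0) i := by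
  rw [Amat_eq_tensorPow, tensorPow_snoc_mulVec, Amat₁_mulVec_apply, if_pos rfl, ← Amat_eq_tensorPow]
  rfl

theorem Amat_mulVec_snoc_of_ne_zero (v : (Fin (m + 1) → Fin n) → ZMod 2) (i : Fin m → Fin n)
    {a : Fin n} (ha : a ≠ 0) :
    (Amat n (m + 1) *ᵥ v) (Fin.snoc i a) =
      (Amat n m *ᵥ subvec v 0) i + (Amat n m *ᵥ subvec v a) i := by
  rw [Amat_eq_tensorPow, tensorPow_snoc_mulVec, Amat₁_mulVec_apply, if_neg ha,
    ← Amat_eq_tensorPow]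
  rfl

theorem wtTuple_snoc_zero (i : Fin m → Fin n) : wtTuple (Fin.snoc i (0 : Fin n)) = wtTuple i := by
  simp [wtTuple, Finset.card_filter, Fin.sum_univ_castSucc]

theorem wtTuple_snoc_of_ne_zero (i : Fin m → Fin n) {a : Fin n} (ha : a ≠ 0) :
    wtTuple (Fin.snoc i a) = wtTuple i + 1 := by
  simp [wtTuple, Finset.card_filter, Fin.sum_univ_castSucc, ha]

theorem wtTuple_eq_zero_iff (i : Fin m → Fin n) : wtTuple i = 0 ↔ i = 0 := by
  simp [wtTuple, funext_iff]

end Amat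

theorem wtTuple_le {n m : ℕ} (i : Fin m → Fin n) : wtTuple i ≤ m :=
  (card_filter_le _ _).trans (card_fin m).le

section Codes

variable {n : ℕ}

def rowCode (n m r : ℕ) : Submodule (ZMod 2) ((Fin m → Fin n) → ZMod 2) :=
  Submodule.span (ZMod 2) (Amat n m '' {i | r + 1 ≤ wtTuple i})

def colCode (n m r : ℕ) : Submodule (ZMod 2) ((Fin m → Fin n) → ZMod 2) :=
  Submodule.span (ZMod 2) ((fun j i => Amat n m i j) '' {j | wtTuple j ≤ r})

theorem rowCode_of_le {m r : ℕ} (h : m ≤ r) : rowCode n m r = ⊥ :=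
  Submodule.span_eq_bot.2 fun _ ⟨i, hi, _⟩ => absurd ((wtTuple_le i).trans h) (Nat.not_le.2 hi)

theorem colCode_mono {m r s : ℕ} (h : r ≤ s) : colCode n m r ≤ colCode n m s :=
  Submodule.span_mono (Set.image_mono fun _ hj => le_trans hj h)

variable [NeZero n] {m : ℕ}

theorem mem_rowCode_iff {r : ℕ} (v : (Fin m → Fin n) → ZMod 2) :
    v ∈ rowCode n m r ↔ ∀ i, wtTuple i ≤ r → (v ᵥ* Amat n m) i = 0 := by
  rw [← SetLike.mem_coe, rowCode, span_rows_eq_of_mul_eq_one (Amat_mul_self m)]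
  simp

theorem mem_colCode_iff {r : ℕ} (v : (Fin m → Fin n) → ZMod 2) :
    v ∈ colCode n m r ↔ ∀ i, r + 1 ≤ wtTuple i → (Amat n m *ᵥ v) i = 0 := by
  rw [← SetLike.mem_coe, colCode, span_cols_eq_of_mul_eq_one (Amat_mul_self m)]
  simp

end Codes

section BermanCodes

variable {n : ℕ}

theorem bermanD_of_le {m r : ℕ} (h : m ≤ r) : BermanD n m r = {0} := by
  cases m with
  | zero => rfl
  | succ m => simp [BermanD, h, show r ≠ 0 by omega]

theorem bermanD_succ_succ {m s : ℕ} (h : s < m) :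
    BermanD n (m + 1) (s + 1) = {v | (∀ l, subvec v l ∈ BermanD n m s) ∧
      (fun i => ∑ l, subvec v l i) ∈ BermanD n m (s + 1)} := by
  simp [BermanD, show ¬ m + 1 ≤ s + 1 by omega]

theorem bermanC_of_le {m r : ℕ} (h : m ≤ r) : BermanC n m r = Set.univ := by
  cases m with
  | zero => rfl
  | succ m => simp [BermanC, h, show r ≠ 0 by omega]

theorem bermanC_succ_succ [NeZero n] {m s : ℕ} (h : s < m) :
    BermanC n (m + 1) (s + 1) = {v | ∃ (u : (Fin m → Fin n) → ZMod 2)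
      (w : Fin n → (Fin m → Fin n) → ZMod 2), u ∈ BermanC n m (s + 1) ∧
      (∀ l ≠ Fin.rev 0, w l ∈ BermanC n m s) ∧ w (Fin.rev 0) = 0 ∧ ∀ l, subvec v l = u + w l} := by
  have h_lt : ∀ l : Fin n, (l : ℕ) < n - 1 ↔ l ≠ Fin.rev 0 := fun l => by
    simp [Fin.ext_iff, Fin.val_rev]; omega
  have h_eq : ∀ l : Fin n, (l : ℕ) = n - 1 ↔ l = Fin.rev 0 := fun l => by
    simp [Fin.ext_iff, Fin.val_rev]
  simp [BermanC, show ¬ m + 1 ≤ s + 1 by omega, h_lt, h_eq]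

variable [NeZero n] {m : ℕ}

theorem forall_wtTuple_le_zero_vecMul_Amat_iff (v : (Fin m → Fin n) → ZMod 2) :
    (∀ i, wtTuple i ≤ 0 → (v ᵥ* Amat n m) i = 0) ↔ ∑ i, v i = 0 := by
  simp only [Nat.le_zero, wtTuple_eq_zero_iff, forall_eq, vecMul_Amat_zero]

theorem forall_wtTuple_le_succ_vecMul_Amat_iff (v : (Fin (m + 1) → Fin n) → ZMod 2) (s : ℕ) :
    (∀ i, wtTuple i ≤ s + 1 → (v ᵥ* Amat n (m + 1)) i = 0) ↔
      (∀ l, ∀ i, wtTuple i ≤ s → (subvec v l ᵥ* Amat n m) i = 0) ∧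
        ∀ i, wtTuple i ≤ s + 1 → ((∑ l, subvec v l) ᵥ* Amat n m) i = 0 := by
  constructor
  · intro h
    have h_ne : ∀ a ≠ 0, ∀ i, wtTuple i ≤ s → (subvec v a ᵥ* Amat n m) i = 0 := fun a ha i hi => by
      rw [← vecMul_Amat_snoc_of_ne_zero v i ha]
      exact h _ (by rw [wtTuple_snoc_of_ne_zero i ha]; omega)
    have h_sum : ∀ i, wtTuple i ≤ s + 1 → ((∑ l, subvec v l) ᵥ* Amat n m) i = 0 := fun i hi => by
      rw [← vecMul_Amat_snoc_zero]
      exact h _ (by rwa [wtTuple_snoc_zero])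
    refine ⟨fun l i hi => ?_, h_sum⟩
    obtain rfl | hl := eq_or_ne l 0
    · have := h_sum i (by omega)
      rwa [sum_vecMul, Finset.sum_apply, Fintype.sum_eq_single 0 fun a ha => h_ne a ha i hi] at this
    · exact h_ne l hl i hi
  · rintro ⟨h_sub, h_sum⟩ i hi
    induction i using Fin.snocCases with
    | snoc i a =>
      obtain rfl | ha := eq_or_ne a 0
      · rw [vecMul_Amat_snoc_zero]
        exact h_sum i (by rwa [wtTuple_snoc_zero] at hi)
      · rw [vecMul_Amat_snoc_of_ne_zero v i ha]
        exact h_sub a i (by rw [wtTuple_snoc_of_ne_zero i ha] at hi; omega)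

theorem bermanD_eq_rowCode (m r : ℕ) : BermanD n m r = rowCode n m r := by
  induction m generalizing r with
  | zero => rw [bermanD_of_le (Nat.zero_le r), rowCode_of_le (Nat.zero_le r), Submodule.bot_coe]
  | succ m ih =>
    rcases le_or_gt (m + 1) r with h | h
    · rw [bermanD_of_le h, rowCode_of_le h, Submodule.bot_coe]
    ext v
    rw [SetLike.mem_coe, mem_rowCode_iff]
    cases r with
    | zero => rw [forall_wtTuple_le_zero_vecMul_Amat_iff]; rfl
    | succ s =>
      rw [bermanD_succ_succ (by omega), forall_wtTuple_le_succ_vecMul_Amat_iff]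
      simp only [Set.mem_ofPred_eq, ih, SetLike.mem_coe, mem_rowCode_iff, Finset.sum_fn]

theorem colCode_zero : (colCode n m 0 : Set ((Fin m → Fin n) → ZMod 2)) =
    {v | ∃ c : ZMod 2, ∀ i, v i = c} := by
  have h_wt : {j : Fin m → Fin n | wtTuple j ≤ 0} = {0} := by
    ext j; simp [wtTuple_eq_zero_iff]
  ext v
  rw [SetLike.mem_coe, colCode, h_wt, Set.image_singleton, Submodule.mem_span_singleton]
  simp [funext_iff, Amat_apply_zero, eq_comm]

theorem colCode_of_le {r : ℕ} (h : m ≤ r) : colCode n m r = ⊤ :=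
  Submodule.eq_top_iff'.2 fun v => (mem_colCode_iff v).2 fun i hi =>
    absurd ((wtTuple_le i).trans h) (Nat.not_le.2 hi)

theorem forall_le_wtTuple_succ_Amat_mulVec_iff (v : (Fin (m + 1) → Fin n) → ZMod 2) (s : ℕ) :
    (∀ i, s + 1 + 1 ≤ wtTuple i → (Amat n (m + 1) *ᵥ v) i = 0) ↔
      (∀ i, s + 1 + 1 ≤ wtTuple i → (Amat n m *ᵥ subvec v 0) i = 0) ∧
        ∀ l i, s + 1 ≤ wtTuple i → (Amat n m *ᵥ (subvec v l - subvec v 0)) i = 0 := by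
  have h_sub : ∀ l ≠ 0, ∀ i,
      (Amat n m *ᵥ (subvec v l - subvec v 0)) i = (Amat n (m + 1) *ᵥ v) (Fin.snoc i l) :=
    fun l hl i => by
      rw [mulVec_sub, Pi.sub_apply, CharTwo.sub_eq_add, add_comm,
        Amat_mulVec_snoc_of_ne_zero v i hl]
  constructor
  · intro h
    refine ⟨fun i hi => ?_, fun l i hi => ?_⟩
    · rw [← Amat_mulVec_snoc_zero]
      exact h _ (by rwa [wtTuple_snoc_zero])
    · obtain rfl | hl := eq_or_ne l 0
      · simp
      · rw [h_sub l hl]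
        exact h _ (by rw [wtTuple_snoc_of_ne_zero i hl]; omega)
  · rintro ⟨h_zero, h_sub'⟩ i hi
    induction i using Fin.snocCases with
    | snoc i a =>
      obtain rfl | ha := eq_or_ne a 0
      · rw [Amat_mulVec_snoc_zero]
        exact h_zero i (by rwa [wtTuple_snoc_zero] at hi)
      · rw [← h_sub a ha]
        exact h_sub' a i (by rw [wtTuple_snoc_of_ne_zero i ha] at hi; omega)

theorem bermanC_eq_colCode (m r : ℕ) : BermanC n m r = colCode n m r := by
  induction m generalizing r with
  | zero => rw [bermanC_of_le (Nat.zero_le r), colCode_of_le (Nat.zero_le r), Submodule.top_coe]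
  | succ m ih =>
    rcases le_or_gt (m + 1) r with h | h
    · rw [bermanC_of_le h, colCode_of_le h, Submodule.top_coe]
    cases r with
    | zero => rw [colCode_zero]; rfl
    | succ s =>
      ext v
      rw [bermanC_succ_succ (by omega), Set.mem_ofPred_eq, SetLike.mem_coe, mem_colCode_iff,
        forall_le_wtTuple_succ_Amat_mulVec_iff]
      simp only [ih, SetLike.mem_coe]
      rw [exists_add_decomp_iff (colCode_mono (Nat.le_succ s)) _ _ 0]
      simp only [mem_colCode_iff]

end BermanCodes

theorem berman_basis_Amat_general (n m r : ℕ) (hn : 2 ≤ n) :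
    (LinearIndependent (ZMod 2)
        (fun i : {i : Fin m → Fin n // r + 1 ≤ wtTuple i} => Amat n m i.1) ∧
      (↑(Submodule.span (ZMod 2)
          ((fun i => Amat n m i) '' {i : Fin m → Fin n | r + 1 ≤ wtTuple i})) :
        Set ((Fin m → Fin n) → ZMod 2)) = BermanD n m r) ∧
    (LinearIndependent (ZMod 2)
        (fun j : {j : Fin m → Fin n // wtTuple j ≤ r} => fun i => Amat n m i j.1) ∧
      (↑(Submodule.span (ZMod 2)
          ((fun j => fun i => Amat n m i j) '' {j : Fin m → Fin n | wtTuple j ≤ r})) :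
        Set ((Fin m → Fin n) → ZMod 2)) = BermanC n m r) := by
  have : NeZero n := ⟨by omega⟩
  have hA : IsUnit (Amat n m) := .of_mul_eq_one _ (Amat_mul_self m)
  exact ⟨⟨(linearIndependent_rows_iff_isUnit.2 hA).comp _ Subtype.coe_injective,
      (bermanD_eq_rowCode m r).symm⟩,
    ⟨(linearIndependent_cols_iff_isUnit.2 hA).comp _ Subtype.coe_injective,
      (bermanC_eq_colCode m r).symm⟩⟩

/-- the rows of `A_m` indexed by tuples of weight `≥ r+1` form a basis of
`D_n(r,m)`, and the columns of `A_m` indexed by tuples of weight `≤ r` form a basis of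
`C_n(r,m)`. -/
theorem berman_basis_Amat (n m r : ℕ) (hn : 2 ≤ n) (hm : 1 ≤ m) (hr : r ≤ m) :
    (LinearIndependent (ZMod 2)
        (fun i : {i : Fin m → Fin n // r + 1 ≤ wtTuple i} => Amat n m i.1) ∧
      (↑(Submodule.span (ZMod 2)
          ((fun i => Amat n m i) '' {i : Fin m → Fin n | r + 1 ≤ wtTuple i})) :
        Set ((Fin m → Fin n) → ZMod 2)) = BermanD n m r) ∧
    (LinearIndependent (ZMod 2)
        (fun j : {j : Fin m → Fin n // wtTuple j ≤ r} => fun i => Amat n m i j.1) ∧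
      (↑(Submodule.span (ZMod 2)
          ((fun j => fun i => Amat n m i j) '' {j : Fin m → Fin n | wtTuple j ≤ r})) :
        Set ((Fin m → Fin n) → ZMod 2)) = BermanC n m r) :=
  berman_basis_Amat_general n m r hn
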